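/- Let P ⊆ ℝⁿ be a polytope in standard form. A point x ∈ P is a vertex (extreme point) of P if and only if its support is minimal among supports of points of P, i.e. there is no y ∈ P with supp(y) < supp(x). -/

import Mathlib

/-!
Write `P = ℝ≥0ⁿ ∩ A` with `A` affine. If `y ∈ P` has support inside that of `x ≠ y`, then
`x + t (x - y)` stays in `P` for small `t > 0`, and `x` lies strictly between it and `y`; so an
extreme point has minimal support. Conversely, if `x` lies strictly between `y ≠ z` in `P`, then
`y - z` vanishes off the support of `x`, and moving from `x` along `±(y - z)` until the first
coordinate hits zero (the ratio test of the simplex method) gives a point of `P` with strictly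
smaller support.
-/

open Filter Topology

/-- The support of a non-negative vector, as a 0/1 vector. -/
noncomputable def supp {n : ℕ} (v : Fin n → ℝ) : Fin n → ℝ := fun i => if 0 < v i then 1 else 0

/-- A set is in standard form if it equals the intersection of the non-negative
orthant with its affine hull. -/
def StdForm {n : ℕ} (P : Set (Fin n → ℝ)) : Prop :=
  P = {x | ∀ i, 0 ≤ x i} ∩ (affineSpan ℝ P : Set (Fin n → ℝ))

/-- `F` is a face of `P`: the zero set in `P` of a valid linear inequality. -/
def IsFace {n : ℕ} (P F : Set (Fin n → ℝ)) : Prop :=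
  ∃ (a : Fin n → ℝ) (b : ℝ), (∀ x ∈ P, b ≤ ∑ i, a i * x i) ∧
    F = {x ∈ P | ∑ i, a i * x i = b}

theorem supp_le_supp_iff {n : ℕ} (x y : Fin n → ℝ) :
    supp y ≤ supp x ↔ {i | 0 < y i} ⊆ {i | 0 < x i} := by
  refine forall_congr' fun i => ?_
  by_cases hy : 0 < y i <;> by_cases hx : 0 < x i <;> simp [supp, hx, hy]

theorem supp_lt_supp_iff {n : ℕ} (x y : Fin n → ℝ) :
    supp y < supp x ↔ {i | 0 < y i} ⊂ {i | 0 < x i} := by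
  rw [lt_iff_le_not_ge, supp_le_supp_iff, supp_le_supp_iff, Set.ssubset_def]

section Orthant

variable {ι : Type*}

theorem eq_zero_of_mem_openSegment_of_nonneg {x y z : ι → ℝ} (hy : ∀ i, 0 ≤ y i)
    (hz : ∀ i, 0 ≤ z i) (hx : x ∈ openSegment ℝ y z) {i : ι} (hi : x i = 0) :
    y i = 0 ∧ z i = 0 := by
  obtain ⟨a, b, ha, hb, -, rfl⟩ := hx
  simp only [Pi.add_apply, Pi.smul_apply, smul_eq_mul] at hi
  have := hy i
  have := hz i
  constructor <;> nlinarith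

variable [Finite ι]

theorem eventually_nonneg_add_mul {x v : ι → ℝ} (hx : ∀ i, 0 ≤ x i)
    (hv : ∀ i, x i = 0 → v i = 0) : ∀ᶠ t in 𝓝 (0 : ℝ), ∀ i, 0 ≤ x i + t * v i := by
  refine eventually_all.2 fun i => ?_
  rcases (hx i).eq_or_lt with hxi | hxi
  · simp [← hxi, hv i hxi.symm]
  · have hcont : Continuous fun t : ℝ => x i + t * v i := by fun_prop
    exact (hcont.tendsto' 0 (x i) (by simp)).eventually (lt_mem_nhds hxi) |>.mono
      fun _ ht => ht.le

theorem exists_nonneg_add_mul_eq_zero {x v : ι → ℝ} (hx : ∀ i, 0 ≤ x i) (hv : ∃ i, v i < 0) :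
    ∃ t : ℝ, (∀ i, 0 ≤ x i + t * v i) ∧ ∃ j, v j < 0 ∧ x j + t * v j = 0 := by
  obtain ⟨j, hj : v j < 0, hmin⟩ :=
    Set.exists_min_image {i | v i < 0} (fun i => x i / -v i) (Set.toFinite _) hv
  have hvj : 0 < -v j := neg_pos.2 hj
  refine ⟨x j / -v j, fun i => ?_, j, hj, by field_simp [hj.ne]; ring⟩
  rcases lt_or_ge (v i) 0 with hvi | hvi
  · have := mul_le_mul_of_nonneg_right (hmin i hvi) (neg_pos.2 hvi).le
    rw [div_mul_cancel₀ _ (neg_pos.2 hvi).ne'] at this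
    linarith
  · have := div_nonneg (hx j) hvj.le
    nlinarith [hx i]

variable (A : AffineSubspace ℝ (ι → ℝ))

theorem eq_of_mem_extremePoints_of_pos_subset {x y : ι → ℝ}
    (hx : x ∈ Set.extremePoints ℝ ({x | ∀ i, 0 ≤ x i} ∩ A))
    (hy : y ∈ {x : ι → ℝ | ∀ i, 0 ≤ x i} ∩ A) (hxy : {i | 0 < y i} ⊆ {i | 0 < x i}) :
    y = x := by
  obtain ⟨⟨hx0, hxA⟩, hext⟩ := hx
  obtain ⟨hy0, hyA⟩ := hy
  have hsupp : ∀ i, x i = 0 → x i - y i = 0 := fun i hxi => by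
    have : ¬ 0 < y i := fun h => (hxy h).ne' hxi
    linarith [hy0 i]
  obtain ⟨t, ht, htpos : 0 < t⟩ := ((eventually_nhdsWithin_of_eventually_nhds
    (eventually_nonneg_add_mul hx0 hsupp)).and (self_mem_nhdsWithin (s := Set.Ioi 0))).exists
  have hzA : t • (x -ᵥ y) +ᵥ x ∈ A := A.smul_vsub_vadd_mem t hxA hyA hxA
  have hz0 : ∀ i, 0 ≤ (t • (x -ᵥ y) +ᵥ x) i := fun i => by
    simpa [add_comm] using ht i
  refine hext ⟨hy0, hyA⟩ ⟨hz0, hzA⟩ ⟨t / (1 + t), 1 / (1 + t), by positivity,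
    by positivity, by field_simp; ring, ?_⟩
  ext i
  simp only [Pi.add_apply, Pi.smul_apply, smul_eq_mul, vsub_eq_sub, vadd_eq_add, Pi.sub_apply]
  field_simp
  ring

theorem exists_pos_ssubset_of_exists_lt {x y z : ι → ℝ}
    (hx : x ∈ {x : ι → ℝ | ∀ i, 0 ≤ x i} ∩ A) (hy : y ∈ A) (hz : z ∈ A)
    (hyz : ∀ i, x i = 0 → y i = z i) (hlt : ∃ i, y i < z i) :
    ∃ w ∈ {x : ι → ℝ | ∀ i, 0 ≤ x i} ∩ A, {i | 0 < w i} ⊂ {i | 0 < x i} := by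
  obtain ⟨hx0, hxA⟩ := hx
  obtain ⟨t, hw0, j, hvj, hwj⟩ :=
    exists_nonneg_add_mul_eq_zero (v := y - z) hx0
      (by simpa only [Pi.sub_apply, sub_neg] using hlt)
  have hw : ∀ i, (t • (y -ᵥ z) +ᵥ x) i = x i + t * (y i - z i) := fun i => by
    simp [add_comm]
  have hpos : ∀ i, x i ≠ 0 → 0 < x i := fun i hi => (hx0 i).lt_of_ne' hi
  refine ⟨_, ⟨fun i => (hw i).symm ▸ hw0 i, A.smul_vsub_vadd_mem t hy hz hxA⟩,
    (Set.ssubset_iff_of_subset fun i hi => ?_).2 ⟨j, ?_, ?_⟩⟩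
  · refine hpos i fun hxi => ?_
    rw [Set.mem_ofPred_eq, hw, hxi, hyz i hxi, sub_self, mul_zero, add_zero] at hi
    exact hi.false
  · refine hpos j fun hxj => ?_
    rw [Pi.sub_apply, hyz j hxj, sub_self] at hvj
    exact hvj.false
  · simp only [Set.mem_ofPred_eq, hw]
    exact hwj.not_gt

theorem mem_extremePoints_nonneg_inter_iff {x : ι → ℝ}
    (hx : x ∈ {x : ι → ℝ | ∀ i, 0 ≤ x i} ∩ A) :
    x ∈ Set.extremePoints ℝ ({x | ∀ i, 0 ≤ x i} ∩ A) ↔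
      ¬∃ y ∈ {x : ι → ℝ | ∀ i, 0 ≤ x i} ∩ A, {i | 0 < y i} ⊂ {i | 0 < x i} := by
  refine ⟨fun hext ⟨y, hy, hyx⟩ => ?_, fun hmin => ⟨hx, fun y hy z hz hseg => ?_⟩⟩
  · obtain rfl := eq_of_mem_extremePoints_of_pos_subset A hext hy hyx.subset
    exact hyx.ne rfl
  · by_contra hne
    have hyz : y ≠ z := by
      rintro rfl
      rw [openSegment_same] at hseg
      exact hne hseg.symm
    have hzero : ∀ i, x i = 0 → y i = z i := fun i hi => by
      obtain ⟨hyi, hzi⟩ := eq_zero_of_mem_openSegment_of_nonneg hy.1 hz.1 hseg hi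
      rw [hyi, hzi]
    obtain ⟨i, hi⟩ := Function.ne_iff.1 hyz
    apply hmin
    rcases hi.lt_or_gt with h | h
    · exact exists_pos_ssubset_of_exists_lt A hx hy.2 hz.2 hzero ⟨i, h⟩
    · exact exists_pos_ssubset_of_exists_lt A hx hz.2 hy.2 (fun i hi => (hzero i hi).symm)
        ⟨i, h⟩

end Orthant

theorem stmt11_general {n : ℕ} (P : Set (Fin n → ℝ))
    (hStd : StdForm P) (x : Fin n → ℝ) (hx : x ∈ P) :
    x ∈ Set.extremePoints ℝ P ↔ ¬∃ y ∈ P, supp y ≤ supp x ∧ supp y ≠ supp x := by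
  have key := mem_extremePoints_nonneg_inter_iff (affineSpan ℝ P) (by rwa [hStd] at hx)
  rw [← hStd] at key
  simp_rw [← lt_iff_le_and_ne, supp_lt_supp_iff]
  exact key

theorem stmt11 {n : ℕ} (P : Set (Fin n → ℝ)) (hComp : IsCompact P) (hConv : Convex ℝ P)
    (hStd : StdForm P) (x : Fin n → ℝ) (hx : x ∈ P) :
    x ∈ Set.extremePoints ℝ P ↔ ¬∃ y ∈ P, supp y ≤ supp x ∧ supp y ≠ supp x :=
  stmt11_general P hStd x hx
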